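/- If p is a pattern of admissibility degree k (k finite), then there exists a numerical semigroup S that admits every pattern of admissibility degree k+1 but does not admit p. -/

import Mathlib

/-
If ad(p) = 0, then p is not admissible and S = ℕ works. Otherwise write bᵢ = a₁ + ⋯ + aᵢ.
Each derivative lowers every bᵢ by one and deletes the leading coefficient once b₁ has reached 0,
so a strict prefix minimum bᵢ disappears after bᵢ steps while every other bᵢ survives. Hence
p⁽ᵐ⁾ is admissible iff all bᵢ ≥ 0 and bᵢ ≥ m whenever bᵢ ≤ bⱼ for some 1 ≤ j < i. So ad(p) = k
means that the least such "dominated" bᵢ equals k - 1, and, consecutive partial sums being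
distinct, some earlier partial sum bⱼ = d exceeds it.

Take S = {0} ∪ ⋃_{0<t<k} [tN, tN + t] ∪ [kN, ∞) with N = d + 1. Evaluating p at N + 1 (j times),
then N (i - j times), then 0 gives (k - 1)N + d ∉ S. If ad(q) = k + 1, then all partial sums of q
are ≥ 0 and its dominated ones are ≥ k. For s nonincreasing in S, either no negative coefficient
meets a nonzero sᵢ, and q(s) is an ℕ-combination of elements of S, or one does, all later partial
sums are ≥ k, and Abel summation gives q(s) ≥ kN.
-/

/-- A numerical semigroup: an additive submonoid of ℕ with finite complement. -/
def IsNumericalSemigroup (S : Set ℕ) : Prop :=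
  0 ∈ S ∧ (∀ a ∈ S, ∀ b ∈ S, a + b ∈ S) ∧ Sᶜ.Finite

/-- Evaluation of a pattern (list of coefficients a₁,…,aₙ) at s₁,…,sₙ. -/
def patEval (p : List ℤ) (s : ℕ → ℕ) : ℤ :=
  ∑ i ∈ Finset.range p.length, p.getD i 0 * (s i : ℤ)

/-- `S` admits the pattern `p`: p(s₁,…,sₙ) ∈ S for all s₁ ≥ ⋯ ≥ sₙ in S. -/
def AdmitsPat (S : Set ℕ) (p : List ℤ) : Prop :=
  ∀ s : ℕ → ℕ, (∀ i, s i ∈ S) → (∀ i j, i ≤ j → s j ≤ s i) →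
    ∃ m ∈ S, (m : ℤ) = patEval p s

/-- A pattern is admissible if it is admitted by some numerical semigroup. -/
def Admissible (p : List ℤ) : Prop :=
  ∃ S : Set ℕ, IsNumericalSemigroup S ∧ AdmitsPat S p

/-- The derivative p' of a pattern. -/
def pderiv : List ℤ → List ℤ
  | [] => []
  | a :: q => if a = 1 then q else (a - 1) :: q

/-- The admissibility degree: least k such that p⁽ᵏ⁾ is not admissible, or ∞. -/
noncomputable def adDeg (p : List ℤ) : ℕ∞ :=
  sInf ((fun m : ℕ => (m : ℕ∞)) '' {m : ℕ | ¬ Admissible (pderiv^[m] p)})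

/-- The partial sum bᵢ = a₁ + ⋯ + aᵢ of the coefficients of `p`. -/
def psum (p : List ℤ) (i : ℕ) : ℤ :=
  ∑ j ∈ Finset.range i, p.getD j 0

open Finset

section PartialSums

variable {p : List ℤ} {s : ℕ → ℕ}

@[simp] lemma psum_zero (p : List ℤ) : psum p 0 = 0 := by simp [psum]

lemma psum_succ (p : List ℤ) (i : ℕ) : psum p (i + 1) = psum p i + p.getD i 0 :=
  sum_range_succ _ _

lemma psum_one (p : List ℤ) : psum p 1 = p.getD 0 0 := by simp [psum]

lemma psum_cons_succ (a : ℤ) (t : List ℤ) (i : ℕ) : psum (a :: t) (i + 1) = a + psum t i := by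
  simp [psum, sum_range_succ', add_comm]

lemma psum_succ_ne (hp : ∀ a ∈ p, a ≠ 0) {i : ℕ} (hi : i < p.length) :
    psum p (i + 1) ≠ psum p i := by
  rw [psum_succ, List.getD_eq_getElem _ _ hi]
  simpa using hp _ (List.getElem_mem hi)

lemma patEval_eq_sum_range {n : ℕ} (s : ℕ → ℕ) (hn : p.length ≤ n) :
    patEval p s = ∑ l ∈ range n, p.getD l 0 * s l := by
  refine sum_subset (range_subset_range.2 hn) fun l _ hl => ?_
  rw [List.getD_eq_default _ _ (by simpa using hl), zero_mul]

lemma patEval_add (p : List ℤ) (s t : ℕ → ℕ) :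
    patEval p (s + t) = patEval p s + patEval p t := by
  simp [patEval, mul_add, sum_add_distrib]

lemma patEval_step (p : List ℤ) (i x : ℕ) :
    patEval p (fun l => if l < i then x else 0) = psum p i * x := by
  rw [patEval_eq_sum_range _ (Nat.le_add_left p.length i), sum_range_add, psum, sum_mul]
  refine (add_eq_left.2 (sum_eq_zero fun l _ => by simp)).trans
    (sum_congr rfl fun l hl => by simp [mem_range.1 hl])

lemma psum_mul_le_sum (hs : Antitone s) {m : ℕ}
    (h0 : ∀ i ≤ m, 0 ≤ psum p i) :
    psum p (m + 1) * s m ≤ ∑ l ∈ range (m + 1), p.getD l 0 * s l := by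
  induction m with
  | zero => simp [psum_one]
  | succ m ih =>
    have hsm : (s (m + 1) : ℤ) ≤ s m := by exact_mod_cast hs m.le_succ
    have := ih fun i hi => h0 i (by omega)
    rw [sum_range_succ, psum_succ]
    nlinarith [mul_le_mul_of_nonneg_left hsm (h0 (m + 1) le_rfl)]

lemma mul_sub_add_psum_mul_le_sum (hs : Antitone s) {l m : ℕ} {c : ℤ}
    (h0 : ∀ i ≤ l, 0 ≤ psum p i) (hlm : l ≤ m) (hc : ∀ i, l < i → i ≤ m → c ≤ psum p i) :
    c * (s l - s m) + psum p (m + 1) * s m ≤ ∑ j ∈ range (m + 1), p.getD j 0 * s j := by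
  induction m, hlm using Nat.le_induction with
  | base => simpa using psum_mul_le_sum hs h0
  | succ m hlm ih =>
    have hsm : (s (m + 1) : ℤ) ≤ s m := by exact_mod_cast hs m.le_succ
    have := ih fun i hi hi' => hc i hi (by omega)
    rw [sum_range_succ, psum_succ]
    nlinarith [mul_le_mul_of_nonneg_left hsm (sub_nonneg.2 (hc (m + 1) (by omega) le_rfl))]

lemma mul_le_patEval (hs : Antitone s) {l : ℕ} {c : ℤ}
    (h0 : ∀ i ≤ l, 0 ≤ psum p i) (hl : l < p.length)
    (hc : ∀ i, l < i → i ≤ p.length → c ≤ psum p i) :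
    c * s l ≤ patEval p s := by
  obtain ⟨m, hm⟩ : ∃ m, p.length = m + 1 := ⟨p.length - 1, by omega⟩
  have := mul_sub_add_psum_mul_le_sum hs h0 (by omega : l ≤ m) fun i hi hi' => hc i hi (by omega)
  have hcm := hc (m + 1) (by omega) hm.ge
  rw [patEval_eq_sum_range s hm.le]
  nlinarith [(s m).cast_nonneg (α := ℤ)]

lemma patEval_nonneg (hs : Antitone s) (h0 : ∀ i ≤ p.length, 0 ≤ psum p i) :
    0 ≤ patEval p s := by
  rcases Nat.eq_zero_or_pos p.length with h | h
  · simp [patEval, h]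
  · simpa using mul_le_patEval (c := 0) hs (fun i hi => h0 i (by omega)) h fun i _ hi => h0 i hi

lemma psum_nonneg_of_admissible (h : Admissible p) (i : ℕ) : 0 ≤ psum p i := by
  obtain ⟨S, ⟨hS0, -, hfin⟩, hS⟩ := h
  have hinf : S.Infinite := by simpa using hfin.infinite_compl
  obtain ⟨x, hxS, hx⟩ := hinf.exists_gt 0
  obtain ⟨m, -, hm⟩ := hS (fun l => if l < i then x else 0)
    (fun l => by split_ifs <;> assumption) (fun a b hab => by split_ifs <;> omega)
  rw [patEval_step] at hm
  exact nonneg_of_mul_nonneg_left (hm ▸ m.cast_nonneg) (by exact_mod_cast hx)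

lemma admissible_of_psum_nonneg (h : ∀ i ≤ p.length, 0 ≤ psum p i) : Admissible p :=
  ⟨Set.univ, ⟨trivial, fun _ _ _ _ => trivial, by simp⟩, fun _ _ hs =>
    ⟨_, trivial, Int.toNat_of_nonneg (patEval_nonneg hs h)⟩⟩

end PartialSums

def PartialSumsBound (m : ℕ) (p : List ℤ) : Prop :=
  ∀ i ≤ p.length, 0 ≤ psum p i ∧
    ∀ j, 1 ≤ j → j < i → psum p i ≤ psum p j → (m : ℤ) ≤ psum p i

lemma admissible_iff_partialSumsBound_zero {p : List ℤ} : Admissible p ↔ PartialSumsBound 0 p :=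
  ⟨fun h i _ => ⟨psum_nonneg_of_admissible h i, fun _ _ _ _ => psum_nonneg_of_admissible h i⟩,
    fun h => admissible_of_psum_nonneg fun i hi => (h i hi).1⟩

namespace PartialSumsBound

variable {m : ℕ} {p : List ℤ} {i j : ℕ}

lemma psum_pos (h : PartialSumsBound m p) (hm : 0 < m) (h1 : psum p 1 ≠ 0) (hi1 : 1 ≤ i)
    (hi : i ≤ p.length) : 0 < psum p i := by
  refine (h i hi).1.lt_of_ne fun h0 => ?_
  obtain rfl | hi1 := hi1.eq_or_lt
  · exact h1 h0.symm
  · have := (h i hi).2 1 le_rfl hi1 (h0 ▸ (h 1 (by omega)).1)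
    omega

lemma le_psum_of_le_psum (h : PartialSumsBound m p) (hj : 1 ≤ j) (hji : j ≤ i) (hi : i ≤ p.length)
    (hmj : (m : ℤ) ≤ psum p j) : (m : ℤ) ≤ psum p i := by
  by_cases hle : psum p i ≤ psum p j
  · obtain rfl | hji := hji.eq_or_lt
    · exact hmj
    · exact (h i hi).2 j hj hji hle
  · linarith

lemma le_psum_succ_of_neg (h : PartialSumsBound m p) {l : ℕ} (hl : p.getD l 0 < 0) :
    (m : ℤ) ≤ psum p (l + 1) := by
  have hlen : l < p.length := by
    by_contra hge
    rw [List.getD_eq_default _ _ (not_lt.1 hge)] at hl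
    exact hl.false
  have hl1 : 1 ≤ l := by
    by_contra hl0
    obtain rfl : l = 0 := by omega
    have := (h 1 (by omega)).1
    rw [psum_one] at this
    omega
  exact (h (l + 1) hlen).2 l hl1 l.lt_succ_self (by rw [psum_succ]; omega)

lemma exists_lt_psum_of_le (h : PartialSumsBound m p) (hp : ∀ a ∈ p, a ≠ 0) (hj : 1 ≤ j)
    (hji : j < i) (hi : i ≤ p.length) (hle : psum p i ≤ psum p j) :
    ∃ j' < i, (m : ℤ) < psum p j' := by
  have hmi := (h i hi).2 j hj hji hle
  rcases (psum_succ_ne hp (by omega : j < p.length)).lt_or_gt with hlt | hgt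
  · exact ⟨j, hji, ((h (j + 1) (by omega)).2 j hj j.lt_succ_self hlt.le).trans_lt hlt⟩
  · refine ⟨j + 1, lt_of_le_of_ne hji fun hij => ?_, by linarith⟩
    rw [hij] at hgt
    linarith

lemma exists_psum_eq_of_not_succ (h : PartialSumsBound m p) (hp : ∀ a ∈ p, a ≠ 0)
    (hn : ¬ PartialSumsBound (m + 1) p) :
    ∃ i j d : ℕ, j < i ∧ psum p i = m ∧ psum p j = d ∧ m < d := by
  unfold PartialSumsBound at hn
  push Not at hn
  obtain ⟨i, hi, hbad⟩ := hn
  obtain ⟨j, hj, hji, hle, hlt⟩ := hbad (h i hi).1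
  have hmi := (h i hi).2 j hj hji hle
  obtain ⟨j', hj'i, hj'⟩ := h.exists_lt_psum_of_le hp hj hji hi hle
  lift (psum p j') to ℕ using (h j' (by omega)).1 with d hd
  exact ⟨i, j', d, hj'i, by push_cast at hlt; omega, hd.symm, by exact_mod_cast hj'⟩

end PartialSumsBound

lemma partialSumsBound_cons_sub_one {m : ℕ} {a : ℤ} {t : List ℤ} (ha : a ≠ 0) :
    PartialSumsBound m ((a - 1) :: t) ↔ PartialSumsBound (m + 1) (a :: t) := by
  have hP : ∀ i, 1 ≤ i → psum ((a - 1) :: t) i = psum (a :: t) i - 1 := by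
    rintro (_ | i) hi
    · omega
    · simp only [psum_cons_succ]; ring
  constructor
  · intro h i hi
    obtain rfl | hi1 := i.eq_zero_or_pos
    · simp
    obtain ⟨h0, hdom⟩ := h i (by simpa using hi)
    rw [hP i hi1] at h0
    refine ⟨by linarith, fun j hj hji hle => ?_⟩
    have := hdom j hj hji (by rw [hP i hi1, hP j hj]; linarith)
    rw [hP i hi1] at this
    push_cast
    linarith
  · intro h i hi
    obtain rfl | hi1 := i.eq_zero_or_pos
    · simp
    have hi' : i ≤ (a :: t).length := by simpa using hi
    have hpos := h.psum_pos m.succ_pos (by simpa [psum_one] using ha) hi1 hi'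
    refine ⟨by rw [hP i hi1]; linarith, fun j hj hji hle => ?_⟩
    rw [hP i hi1, hP j hj] at hle
    rw [hP i hi1]
    have := (h i hi').2 j hj hji (by linarith)
    push_cast at this
    linarith

lemma partialSumsBound_one_cons {m : ℕ} {t : List ℤ} (ht : ∀ x ∈ t, x ≠ 0) :
    PartialSumsBound m t ↔ PartialSumsBound (m + 1) (1 :: t) := by
  constructor
  · intro h i hi
    rcases i with _ | i
    · simp
    have hit : i ≤ t.length := by simpa using hi
    refine ⟨by rw [psum_cons_succ]; linarith [(h i hit).1], fun j hj hji hle => ?_⟩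
    obtain ⟨j, rfl⟩ : ∃ j', j = j' + 1 := ⟨j - 1, by omega⟩
    simp only [psum_cons_succ] at hle ⊢
    push_cast
    suffices (m : ℤ) ≤ psum t i by linarith
    rcases j with _ | j
    · -- only b₁ = 1 dominates, so `psum t i = 0`, which the nonzero head of `t` forbids if `m > 0`
      rcases m.eq_zero_or_pos with rfl | hm
      · simpa using (h i hit).1
      · have := h.psum_pos hm (by simpa using psum_succ_ne ht (by omega : 0 < t.length))
          (by omega) hit
        rw [psum_zero] at hle
        linarith
    · exact (h i hit).2 (j + 1) (by omega) (by omega) (by linarith)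
  · intro h i hi
    have hi' : i + 1 ≤ (1 :: t).length := by simpa using hi
    have hpos := h.psum_pos m.succ_pos (by simp [psum_one]) (by omega) hi'
    rw [psum_cons_succ] at hpos
    refine ⟨by linarith, fun j hj hji hle => ?_⟩
    have := (h (i + 1) hi').2 (j + 1) (by omega) (by omega)
      (by rw [psum_cons_succ, psum_cons_succ]; linarith)
    rw [psum_cons_succ] at this
    push_cast at this
    linarith

lemma pderiv_ne_zero {p : List ℤ} (hp : ∀ a ∈ p, a ≠ 0) : ∀ a ∈ pderiv p, a ≠ 0 := by
  rcases p with _ | ⟨a, t⟩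
  · simp [pderiv]
  · have ht : ∀ x ∈ t, x ≠ 0 := fun x hx => hp x (List.mem_cons_of_mem _ hx)
    have ha := hp a List.mem_cons_self
    simp only [pderiv]
    split_ifs with ha1
    · exact ht
    · intro x hx
      rcases List.mem_cons.1 hx with rfl | hx
      · omega
      · exact ht x hx

lemma partialSumsBound_pderiv_iff {m : ℕ} {p : List ℤ} (hp : ∀ a ∈ p, a ≠ 0) :
    PartialSumsBound m (pderiv p) ↔ PartialSumsBound (m + 1) p := by
  rcases p with _ | ⟨a, t⟩
  · simp [pderiv, PartialSumsBound, psum]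
  · by_cases ha : a = 1
    · subst ha
      simpa [pderiv] using partialSumsBound_one_cons fun x hx => hp x (List.mem_cons_of_mem _ hx)
    · simpa [pderiv, ha] using partialSumsBound_cons_sub_one (hp a List.mem_cons_self)

theorem admissible_iterate_pderiv_iff {m : ℕ} {p : List ℤ} (hp : ∀ a ∈ p, a ≠ 0) :
    Admissible (pderiv^[m] p) ↔ PartialSumsBound m p := by
  induction m generalizing p with
  | zero => exact admissible_iff_partialSumsBound_zero
  | succ m ih =>
    rw [Function.iterate_succ_apply, ih (pderiv_ne_zero hp), partialSumsBound_pderiv_iff hp]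

lemma adDeg_eq_coe_iff {p : List ℤ} {k : ℕ} :
    adDeg p = k ↔ ¬ Admissible (pderiv^[k] p) ∧ ∀ m < k, Admissible (pderiv^[m] p) := by
  set A := {m : ℕ | ¬ Admissible (pderiv^[m] p)}
  have hdeg : adDeg p = ⨅ m ∈ A, (m : ℕ∞) := sInf_image
  rcases A.eq_empty_or_nonempty with hA | hA
  · rw [Set.eq_empty_iff_forall_notMem] at hA
    exact iff_of_false (by simp [hdeg, hA]) fun h => hA k h.1
  · rw [hdeg, ← ENat.natCast_sInf hA, Nat.cast_inj]
    constructor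
    · rintro rfl
      exact ⟨Nat.sInf_mem hA, fun m hm => not_not.1 (Nat.notMem_of_lt_sInf hm)⟩
    · rintro ⟨hk, hlt⟩
      exact le_antisymm (Nat.sInf_le hk) (not_lt.1 fun h => Nat.sInf_mem hA (hlt _ h))

-- The block t = 0 is {0}, and `gapSemigroup 0 N` is all of ℕ.
def gapSemigroup (k N : ℕ) : AddSubmonoid ℕ where
  carrier := {x | k * N ≤ x ∨ ∃ t < k, t * N ≤ x ∧ x ≤ t * N + t}
  zero_mem' := by
    rcases k.eq_zero_or_pos with rfl | hk
    · exact Or.inl (by simp)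
    · exact Or.inr ⟨0, hk, by simp⟩
  add_mem' := by
    rintro x y (hx | ⟨t, htk, htx, hxt⟩) (hy | ⟨u, huk, huy, hyu⟩)
    · exact Or.inl (by omega)
    · exact Or.inl (by omega)
    · exact Or.inl (by omega)
    · by_cases htu : t + u < k
      · exact Or.inr ⟨t + u, htu, by rw [add_mul]; omega, by rw [add_mul]; omega⟩
      · have := Nat.mul_le_mul_right N (not_lt.1 htu)
        rw [add_mul] at this
        exact Or.inl (by omega)

section GapSemigroup

variable {k N x : ℕ}

lemma isNumericalSemigroup_gapSemigroup (k N : ℕ) : IsNumericalSemigroup (gapSemigroup k N) :=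
  ⟨zero_mem _, fun _ ha _ hb => add_mem ha hb,
    (Set.finite_Iio (k * N)).subset fun _ hx => not_le.1 fun h => hx (Or.inl h)⟩

lemma le_of_mem_gapSemigroup (hk : 0 < k) (hx : x ∈ gapSemigroup k N) (hx0 : x ≠ 0) : N ≤ x := by
  rcases hx with h | ⟨_ | t, -, htx, hxt⟩
  · exact (Nat.le_mul_of_pos_left N hk).trans h
  · omega
  · exact (Nat.le_mul_of_pos_left N t.succ_pos).trans htx

lemma mem_gapSemigroup_succ (hx : N ≤ x) (hx' : x ≤ N + 1) : x ∈ gapSemigroup (k + 1) N := by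
  rcases k with _ | k
  · exact Or.inl (by omega)
  · exact Or.inr ⟨1, by omega, by omega, by omega⟩

lemma mul_add_notMem_gapSemigroup {d : ℕ} (hkd : k < d) (hdN : d < N) :
    k * N + d ∉ gapSemigroup (k + 1) N := by
  rintro (h | ⟨t, htk, htx, hxt⟩)
  · rw [add_mul] at h
    omega
  · rcases (Nat.lt_succ_iff.1 htk).lt_or_eq with ht | rfl
    · have : (t + 1) * N ≤ k * N := Nat.mul_le_mul_right N ht
      rw [add_mul] at this
      omega
    · omega

theorem admitsPat_gapSemigroup {q : List ℤ} (hq : PartialSumsBound k q) :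
    AdmitsPat (gapSemigroup k N) q := by
  intro s hsS hs
  by_cases hneg : ∃ l < q.length, s l ≠ 0 ∧ q.getD l 0 < 0
  · obtain ⟨l, hl, hsl, hql⟩ := hneg
    have hle := mul_le_patEval hs (fun i _ => (hq i (by omega)).1) hl fun i hli hi =>
      hq.le_psum_of_le_psum (j := l + 1) (by omega) hli hi (hq.le_psum_succ_of_neg hql)
    have hkN : k * N ≤ k * s l := by
      rcases k.eq_zero_or_pos with rfl | hk
      · simp
      · exact Nat.mul_le_mul_left k (le_of_mem_gapSemigroup hk (hsS l) hsl)
    have hval : ((k * N : ℕ) : ℤ) ≤ patEval q s := le_trans (by exact_mod_cast hkN) hle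
    exact ⟨(patEval q s).toNat, Or.inl (by omega), by omega⟩
  · push Not at hneg
    refine ⟨∑ l ∈ range q.length, (q.getD l 0).toNat * s l,
      sum_mem fun l _ => by simpa using nsmul_mem (hsS l) (q.getD l 0).toNat, ?_⟩
    push_cast [patEval]
    refine sum_congr rfl fun l hl => ?_
    by_cases hsl : s l = 0
    · simp [hsl]
    · rw [Int.toNat_of_nonneg (hneg l (mem_range.1 hl) hsl)]

lemma not_admitsPat_gapSemigroup {p : List ℤ} {i j d : ℕ} (hji : j < i) (hi : psum p i = k)
    (hj : psum p j = d) (hkd : k < d) : ¬ AdmitsPat (gapSemigroup (k + 1) (d + 1)) p := by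
  intro h
  obtain ⟨x, hx, hxp⟩ := h ((fun l => if l < i then d + 1 else 0) + fun l => if l < j then 1 else 0)
    (fun l => by
      simp only [Pi.add_apply]
      split_ifs
      · exact mem_gapSemigroup_succ (by omega) le_rfl
      · exact mem_gapSemigroup_succ le_rfl (by omega)
      · omega
      · exact zero_mem _)
    (fun a b hab => by simp only [Pi.add_apply]; split_ifs <;> omega)
  rw [patEval_add, patEval_step, patEval_step, hi, hj] at hxp
  have hx' : x = k * (d + 1) + d := by
    rw [Nat.cast_one, mul_one] at hxp
    exact_mod_cast hxp
  exact mul_add_notMem_gapSemigroup hkd d.lt_succ_self (hx' ▸ hx)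

end GapSemigroup

/-- If p has (finite) admissibility degree k, then some numerical semigroup S
admits every pattern of admissibility degree k+1 but does not admit p. -/
theorem stmt_9 (p : List ℤ) (hp : ∀ a ∈ p, a ≠ 0) (k : ℕ)
    (hdeg : adDeg p = (k : ℕ∞)) :
    ∃ S : Set ℕ, IsNumericalSemigroup S ∧
      (∀ q : List ℤ, (∀ a ∈ q, a ≠ 0) → adDeg q = ((k + 1 : ℕ) : ℕ∞) →
        AdmitsPat S q) ∧
      ¬ AdmitsPat S p := by
  obtain ⟨hnot, hbelow⟩ := adDeg_eq_coe_iff.1 hdeg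
  suffices ∃ N, ¬ AdmitsPat (gapSemigroup k N) p by
    obtain ⟨N, hN⟩ := this
    refine ⟨_, isNumericalSemigroup_gapSemigroup k N, fun q hq hdq => ?_, hN⟩
    exact admitsPat_gapSemigroup
      ((admissible_iterate_pderiv_iff hq).1 ((adDeg_eq_coe_iff.1 hdq).2 k k.lt_succ_self))
  cases k with
  | zero => exact ⟨0, fun h => hnot ⟨_, isNumericalSemigroup_gapSemigroup 0 0, h⟩⟩
  | succ k =>
    obtain ⟨i, j, d, hji, hi, hj, hkd⟩ :=
      ((admissible_iterate_pderiv_iff hp).1 (hbelow k k.lt_succ_self)).exists_psum_eq_of_not_succ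
        hp (mt (admissible_iterate_pderiv_iff hp).2 hnot)
    exact ⟨d + 1, not_admitsPat_gapSemigroup hji hi hj hkd⟩
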